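/- If B is a biprocess satisfying diff-equivalence, then the two projections fst(B) and snd(B) are trace equivalent. -/
import Mathlib


/-- Iterated labelled transitions: `Steps step p tr q` means `p` reaches `q` performing the
sequence of (visible) labels `tr`. -/
inductive Steps {P L : Type} (step : P → L → P → Prop) : P → List L → P → Prop
  | refl (p : P) : Steps step p [] p
  | cons {p q r : P} {ℓ : L} {tr : List L} :
      step p ℓ q → Steps step q tr r → Steps step p (ℓ :: tr) r

/-- The set of traces of a process: pairs of a label sequence and the resulting frame. -/
def traceSet {P L F : Type} (step : P → L → P → Prop) (frameOf : P → F) (A : P) :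
    Set (List L × F) :=
  {x | ∃ A', Steps step A x.1 A' ∧ frameOf A' = x.2}

/-- Trace inclusion `A ⊑ B`: every trace of `A` is matched by a trace of `B` with the same
label sequence and a statically equivalent frame. -/
def traceIncl {P L F : Type} (step : P → L → P → Prop) (frameOf : P → F)
    (statEq : F → F → Prop) (A B : P) : Prop :=
  ∀ x ∈ traceSet step frameOf A,
    ∃ φ', (x.1, φ') ∈ traceSet step frameOf B ∧ statEq x.2 φ'

/-- Trace equivalence `A ≈ B`. -/
def traceEquiv {P L F : Type} (step : P → L → P → Prop) (frameOf : P → F)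
    (statEq : F → F → Prop) (A B : P) : Prop :=
  traceIncl step frameOf statEq A B ∧ traceIncl step frameOf statEq B A

/-- A biprocess `B0` satisfies diff-equivalence when, for every biprocess `B` reachable from
`B0`, (1) the frames of the two projections of `B` are statically equivalent, and (2) any
labelled step of `fst B` (resp. `snd B`) can be matched by a biprocess step from `B`. -/
def diffEquiv {P Bi L F : Type} (fst snd : Bi → P)
    (biStep : Bi → L → Bi → Prop) (procStep : P → L → P → Prop)
    (frameOf : P → F) (statEq : F → F → Prop) (B0 : Bi) : Prop :=
  ∀ tr B, Steps biStep B0 tr B →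
    statEq (frameOf (fst B)) (frameOf (snd B)) ∧
    (∀ ℓ A, procStep (fst B) ℓ A → ∃ B', biStep B ℓ B' ∧ fst B' = A) ∧
    (∀ ℓ A, procStep (snd B) ℓ A → ∃ B', biStep B ℓ B' ∧ snd B' = A)



lemma Steps.snoc {P L : Type} {step : P → L → P → Prop} {p q r : P} {tr : List L} {ℓ : L}
    (h : Steps step p tr q) (h1 : step q ℓ r) : Steps step p (tr ++ [ℓ]) r := by
  induction h with
  | refl p => exact Steps.cons h1 (Steps.refl _)
  | cons hstep _ ih => exact Steps.cons hstep (ih h1)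

/-- Biprocess multi-steps project to multi-steps of each side. -/
lemma Steps.map {P Bi L : Type} {f : Bi → P} {biStep : Bi → L → Bi → Prop}
    {procStep : P → L → P → Prop}
    (h : ∀ b ℓ b', biStep b ℓ b' → procStep (f b) ℓ (f b'))
    {b b' : Bi} {tr : List L} (hs : Steps biStep b tr b') :
    Steps procStep (f b) tr (f b') := by
  induction hs with
  | refl p => exact Steps.refl _
  | cons h1 _ ih => exact Steps.cons (h _ _ _ h1) ih

/-- Lifting: a multi-step of a projection from a reachable biprocess lifts to a biprocess
multi-step (generalized for induction). -/
lemma lift_side {P Bi L F : Type} (f : Bi → P) (biStep : Bi → L → Bi → Prop)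
    (procStep : P → L → P → Prop) (frameOf : P → F) (statEq : F → F → Prop)
    (B0 : Bi)
    (hmatch : ∀ tr B, Steps biStep B0 tr B →
      ∀ ℓ A, procStep (f B) ℓ A → ∃ B', biStep B ℓ B' ∧ f B' = A)
    {tr0 : List L} {B : Bi} (h0 : Steps biStep B0 tr0 B)
    {tr : List L} {A' : P} (hs : Steps procStep (f B) tr A') :
    ∃ B', Steps biStep B0 (tr0 ++ tr) B' ∧ f B' = A' := by
  have key : ∀ {p tr A'}, Steps procStep p tr A' → ∀ {tr0 B}, Steps biStep B0 tr0 B →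
      f B = p → ∃ B', Steps biStep B0 (tr0 ++ tr) B' ∧ f B' = A' := by
    intro p tr A' hs
    induction hs with
    | refl p =>
      intro tr0 B h0 hfB
      exact ⟨B, by simpa using h0, hfB⟩
    | @cons p q r ℓ tr1 h1 h2 ih =>
      intro tr0 B h0 hfB
      obtain ⟨B1, hB1, hfB1⟩ := hmatch _ _ h0 _ _ (hfB ▸ h1)
      have h0' : Steps biStep B0 (tr0 ++ [ℓ]) B1 := h0.snoc hB1
      obtain ⟨B', hB', hfB'⟩ := ih h0' hfB1
      exact ⟨B', by simpa using hB', hfB'⟩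
  exact key hs h0 rfl

/-- If a biprocess `B0` satisfies diff-equivalence, then its two projections `fst B0` and
`snd B0` are trace equivalent. (Biprocess steps project to steps of each side, and static
equivalence is symmetric.) -/
theorem diffEquiv_implies_traceEquiv {P Bi L F : Type}
    (fst snd : Bi → P) (biStep : Bi → L → Bi → Prop) (procStep : P → L → P → Prop)
    (frameOf : P → F) (statEq : F → F → Prop)
    (hfst : ∀ b ℓ b', biStep b ℓ b' → procStep (fst b) ℓ (fst b'))
    (hsnd : ∀ b ℓ b', biStep b ℓ b' → procStep (snd b) ℓ (snd b'))
    (hsym : ∀ f g, statEq f g → statEq g f)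
    (B0 : Bi) (hdiff : diffEquiv fst snd biStep procStep frameOf statEq B0) :
    traceEquiv procStep frameOf statEq (fst B0) (snd B0) := by
  constructor
  · rintro ⟨tr, φ⟩ ⟨A', hA', rfl⟩
    obtain ⟨B, hB, hfB⟩ := lift_side fst biStep procStep frameOf statEq B0
      (fun tr B h => ((hdiff tr B h).2.1)) (Steps.refl B0) hA'
    exact ⟨frameOf (snd B), ⟨snd B, Steps.map hsnd hB, rfl⟩,
      hfB ▸ (hdiff tr B (by simpa using hB)).1⟩
  · rintro ⟨tr, φ⟩ ⟨A', hA', rfl⟩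
    obtain ⟨B, hB, hfB⟩ := lift_side snd biStep procStep frameOf statEq B0
      (fun tr B h => ((hdiff tr B h).2.2)) (Steps.refl B0) hA'
    exact ⟨frameOf (fst B), ⟨fst B, Steps.map hfst hB, rfl⟩,
      hfB ▸ hsym _ _ (hdiff tr B (by simpa using hB)).1⟩
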